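/- Let ρ be a state and σ a positive definite matrix on ℂ^d, and let ε ∈ (0,1). Then D̲_s^ε(ρ‖σ) = D̄_s^{1−ε}(ρ‖σ). -/

import Mathlib

open Matrix
open scoped ComplexOrder

noncomputable section

/-- Positive part `C₊` of a Hermitian matrix, obtained by applying `x ↦ max x 0` to the
eigenvalues in a spectral decomposition (junk value `0` for non-Hermitian input). -/
def matPos {n : Type*} [Fintype n] [DecidableEq n] (A : Matrix n n ℂ) : Matrix n n ℂ :=
  if hA : A.IsHermitian then
    (hA.eigenvectorUnitary : Matrix n n ℂ) *
      Matrix.diagonal (fun i => ((max (hA.eigenvalues i) 0 : ℝ) : ℂ)) *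
      star (hA.eigenvectorUnitary : Matrix n n ℂ)
  else 0

/-- `Tr C₊` as a real number. -/
def trPos {n : Type*} [Fintype n] [DecidableEq n] (A : Matrix n n ℂ) : ℝ :=
  (matPos A).trace.re

/-- Spectral projection of a Hermitian matrix onto `[0, ∞)` (junk value `0` for
non-Hermitian input). -/
def projNonneg {n : Type*} [Fintype n] [DecidableEq n] (A : Matrix n n ℂ) : Matrix n n ℂ :=
  if hA : A.IsHermitian then
    (hA.eigenvectorUnitary : Matrix n n ℂ) *
      Matrix.diagonal (fun i => if 0 ≤ hA.eigenvalues i then (1 : ℂ) else 0) *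
      star (hA.eigenvectorUnitary : Matrix n n ℂ)
  else 0

/-- The information spectrum relative entropy `D̲_s^ε(ρ‖σ)`. -/
def Dlow {n : Type*} [Fintype n] [DecidableEq n] (ε : ℝ) (ρ σ : Matrix n n ℂ) : ℝ :=
  sSup {γ : ℝ | 1 - ε ≤ trPos (ρ - (2 : ℝ) ^ γ • σ)}

/-- The information spectrum relative entropy `D̄_s^ε(ρ‖σ)`. -/
def Dhigh {n : Type*} [Fintype n] [DecidableEq n] (ε : ℝ) (ρ σ : Matrix n n ℂ) : ℝ :=
  sInf {γ : ℝ | trPos (ρ - (2 : ℝ) ^ γ • σ) ≤ ε}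

/-!
The function `f γ = Tr (ρ - 2^γ σ)₊` is antitone, because `Tr C₊ = max Re Tr (P C)` over
`0 ≤ P ≤ 1` is monotone in the Loewner order. It is strictly decreasing wherever it is positive:
there the maximiser `P`, the spectral projection of `C` onto `[0, ∞)`, is nonzero, so
`Tr (P σ) > 0`. Finally `f` exceeds `1 - ε` far to the left (as `Tr C₊ ≥ Tr C`) and vanishes
far to the right (once `2^γ σ ≥ ρ`). An antitone function that is strictly decreasing on
`{f ≥ a}` and takes values on both sides of `a` has `sup {f ≥ a} = inf {f ≤ a}`; here the level
is `a = 1 - ε > 0`.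
-/

open scoped MatrixOrder

theorem Antitone.csSup_setOf_le_eq_csInf_setOf_le {α β : Type*}
    [ConditionallyCompleteLinearOrder α] [DenselyOrdered α] [LinearOrder β] {f : α → β} {a : β}
    (hf : Antitone f) (hf' : StrictAntiOn f {x | a ≤ f x}) (hlo : ∃ x, f x < a)
    (hhi : ∃ x, a < f x) :
    sSup {x | a ≤ f x} = sInf {x | f x ≤ a} := by
  obtain ⟨x₀, hx₀⟩ := hlo
  obtain ⟨x₁, hx₁⟩ := hhi
  have hbdd : BddAbove {x | a ≤ f x} :=
    ⟨x₀, fun x hx => le_of_not_gt fun h => (hx.trans (hf h.le)).not_gt hx₀⟩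
  have hbdd' : BddBelow {x | f x ≤ a} :=
    ⟨x₁, fun x hx => le_of_not_gt fun h => (hx.trans_lt hx₁).not_ge (hf h.le)⟩
  apply le_antisymm
  · refine csSup_le ⟨x₁, hx₁.le⟩ fun x hx => le_csInf ⟨x₀, hx₀.le⟩ fun y hy => ?_
    by_contra! hyx
    exact (hf' (hx.trans (hf hyx.le)) hx hyx).not_ge (hy.trans hx)
  · by_contra! h
    obtain ⟨x, h₁, h₂⟩ := exists_between h
    rcases le_total a (f x) with hx | hx
    · exact (le_csSup hbdd hx).not_gt h₁
    · exact (csInf_le hbdd' hx).not_gt h₂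

lemma Matrix.IsHermitian.sub_real_smul {n : Type*} {A σ : Matrix n n ℂ} (hA : A.IsHermitian)
    (hσ : σ.IsHermitian) (t : ℝ) : (A - t • σ).IsHermitian :=
  hA.sub (hσ.smul (IsSelfAdjoint.all t))

section

variable {n : Type*} [Fintype n] [DecidableEq n] {A B P σ : Matrix n n ℂ}

lemma matPos_eq_cfc (hA : A.IsHermitian) : matPos A = cfc (fun x : ℝ => max x 0) A := by
  rw [matPos, dif_pos hA, hA.cfc_eq]
  rfl

lemma projNonneg_eq_cfc (hA : A.IsHermitian) :
    projNonneg A = cfc (fun x : ℝ => if 0 ≤ x then 1 else 0) A := by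
  rw [projNonneg, dif_pos hA, hA.cfc_eq, IsHermitian.cfc]
  congr 3
  ext i
  split_ifs <;> simp [*]

lemma projNonneg_mul_self (hA : A.IsHermitian) : projNonneg A * A = matPos A := by
  rw [projNonneg_eq_cfc hA, matPos_eq_cfc hA]
  conv_lhs => enter [2]; rw [← cfc_id' ℝ A]
  rw [← cfc_mul _ _ A (A.finite_real_spectrum.continuousOn _)]
  refine cfc_congr fun x _ => ?_
  split_ifs with hx
  · simp [hx]
  · simp [(not_le.1 hx).le]

lemma projNonneg_nonneg (hA : A.IsHermitian) : 0 ≤ projNonneg A := by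
  rw [projNonneg_eq_cfc hA]
  exact cfc_nonneg fun x _ => by split_ifs <;> norm_num

lemma projNonneg_le_one (hA : A.IsHermitian) : projNonneg A ≤ 1 := by
  rw [projNonneg_eq_cfc hA]
  exact cfc_le_one _ _ fun x _ => by split_ifs <;> norm_num

lemma matPos_nonneg (hA : A.IsHermitian) : 0 ≤ matPos A := by
  rw [matPos_eq_cfc hA]
  exact cfc_nonneg fun x _ => le_max_right x 0

lemma le_matPos (hA : A.IsHermitian) : A ≤ matPos A := by
  conv_lhs => rw [← cfc_id' ℝ A]
  rw [matPos_eq_cfc hA]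
  exact cfc_mono fun x _ => le_max_left x 0

lemma trace_mul_eq_trace_sqrt_conj (A : Matrix n n ℂ) (hB : 0 ≤ B) :
    (A * B).trace = (CFC.sqrt B * A * CFC.sqrt B).trace := by
  conv_lhs => rw [← CFC.sqrt_mul_sqrt_self B hB]
  rw [← Matrix.mul_assoc, Matrix.trace_mul_cycle]

lemma trace_mul_re_nonneg (hA : 0 ≤ A) (hB : 0 ≤ B) : 0 ≤ (A * B).trace.re := by
  rw [trace_mul_eq_trace_sqrt_conj A hB]
  exact (Complex.nonneg_iff.1
    ((CFC.sqrt_nonneg B).isSelfAdjoint.conjugate_nonneg hA).posSemidef.trace_nonneg).1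

lemma trace_mul_re_pos (hA : 0 ≤ A) (hA0 : A ≠ 0) (hB : B.PosDef) : 0 < (A * B).trace.re := by
  rw [trace_mul_eq_trace_sqrt_conj A hB.posSemidef.nonneg]
  have hM := ((CFC.sqrt_nonneg B).isSelfAdjoint.conjugate_nonneg hA).posSemidef
  have hu : IsUnit (CFC.sqrt B) := (CFC.isUnit_sqrt_iff B hB.posSemidef.nonneg).2 hB.isUnit
  have hM0 : CFC.sqrt B * A * CFC.sqrt B ≠ 0 := by
    rwa [Ne, hu.mul_left_eq_zero, hu.mul_right_eq_zero]
  exact (Complex.pos_iff.1 (hM.trace_nonneg.lt_of_ne' (mt hM.trace_eq_zero_iff.1 hM0))).1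

lemma trPos_nonneg (hA : A.IsHermitian) : 0 ≤ trPos A :=
  (Complex.nonneg_iff.1 (matPos_nonneg hA).posSemidef.trace_nonneg).1

lemma trPos_eq_trace_projNonneg_mul (hA : A.IsHermitian) :
    trPos A = (projNonneg A * A).trace.re := by
  rw [projNonneg_mul_self hA, trPos]

lemma trace_mul_re_le_trPos (hP₀ : 0 ≤ P) (hP₁ : P ≤ 1) (hB : B.IsHermitian) :
    (P * B).trace.re ≤ trPos B := by
  have h₁ := trace_mul_re_nonneg hP₀ (sub_nonneg.2 (le_matPos hB))
  have h₂ := trace_mul_re_nonneg (sub_nonneg.2 hP₁) (matPos_nonneg hB)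
  rw [Matrix.mul_sub, Matrix.trace_sub, Complex.sub_re] at h₁
  rw [Matrix.sub_mul, Matrix.one_mul, Matrix.trace_sub, Complex.sub_re] at h₂
  rw [trPos]
  linarith

lemma trace_re_le_trPos (hA : A.IsHermitian) : A.trace.re ≤ trPos A := by
  simpa using trace_mul_re_le_trPos PosSemidef.one.nonneg le_rfl hA

lemma trPos_add_trace_projNonneg_mul_sub_le (hA : A.IsHermitian) (hB : B.IsHermitian) :
    trPos A + (projNonneg A * (B - A)).trace.re ≤ trPos B := by
  calc trPos A + (projNonneg A * (B - A)).trace.re = (projNonneg A * B).trace.re := by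
        rw [trPos_eq_trace_projNonneg_mul hA, Matrix.mul_sub, Matrix.trace_sub, Complex.sub_re]
        ring
    _ ≤ trPos B := trace_mul_re_le_trPos (projNonneg_nonneg hA) (projNonneg_le_one hA) hB

lemma trPos_mono (hA : A.IsHermitian) (hB : B.IsHermitian) (hAB : A ≤ B) : trPos A ≤ trPos B :=
  le_of_add_le_of_nonneg_left (trPos_add_trace_projNonneg_mul_sub_le hA hB)
    (trace_mul_re_nonneg (projNonneg_nonneg hA) (sub_nonneg.2 hAB))

lemma trPos_eq_zero_of_nonpos (hA : A ≤ 0) : trPos A = 0 := by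
  have hA' : A.IsHermitian := by simpa using (neg_nonneg.2 hA).posSemidef.isHermitian.neg
  refine le_antisymm ?_ (trPos_nonneg hA')
  have := trace_mul_re_nonneg (projNonneg_nonneg hA') (neg_nonneg.2 hA)
  rw [trPos_eq_trace_projNonneg_mul hA']
  simpa [Matrix.mul_neg] using this

lemma antitone_trPos_sub_smul (hA : A.IsHermitian) (hσ : 0 ≤ σ) :
    Antitone fun t : ℝ => trPos (A - t • σ) := fun s t hst =>
  trPos_mono (hA.sub_real_smul hσ.posSemidef.isHermitian t)
    (hA.sub_real_smul hσ.posSemidef.isHermitian s)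
    (sub_le_sub_left (smul_le_smul_of_nonneg_right hst hσ) A)

lemma trPos_sub_smul_lt_of_lt (hA : A.IsHermitian) (hσ : σ.PosDef) {s t : ℝ} (hst : s < t)
    (hpos : 0 < trPos (A - t • σ)) : trPos (A - t • σ) < trPos (A - s • σ) := by
  have hC := hA.sub_real_smul hσ.isHermitian t
  have hP0 : projNonneg (A - t • σ) ≠ 0 := by
    intro h
    rw [trPos_eq_trace_projNonneg_mul hC, h] at hpos
    simp at hpos
  have hsplit := trPos_add_trace_projNonneg_mul_sub_le hC (hA.sub_real_smul hσ.isHermitian s)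
  rw [sub_sub_sub_cancel_left, ← sub_smul, Matrix.mul_smul, Matrix.trace_smul, Complex.smul_re,
    smul_eq_mul] at hsplit
  nlinarith [trace_mul_re_pos (projNonneg_nonneg hC) hP0 hσ]

lemma exists_le_smul_of_posDef (hA : A.IsHermitian) (hσ : σ.PosDef) :
    ∃ t : ℝ, 0 < t ∧ A ≤ t • σ := by
  rcases subsingleton_or_nontrivial (Matrix n n ℂ) with h | h
  · exact ⟨1, one_pos, (Subsingleton.elim _ _).le⟩
  obtain ⟨r, hr, hrσ⟩ := (CFC.exists_pos_algebraMap_le_iff hσ.isHermitian.isSelfAdjoint).2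
    fun x hx => hσ.isStrictlyPositive.spectrum_pos hx
  obtain ⟨R, hR⟩ := A.finite_real_spectrum.bddAbove
  refine ⟨max R 1 / r, by positivity, ?_⟩
  calc A ≤ algebraMap ℝ _ R := le_algebraMap_of_spectrum_le hR hA.isSelfAdjoint
    _ ≤ algebraMap ℝ _ (max R 1) := algebraMap_mono (Matrix n n ℂ) (le_max_left R 1)
    _ = (max R 1 / r) • algebraMap ℝ (Matrix n n ℂ) r := by
      rw [Algebra.algebraMap_eq_smul_one, Algebra.algebraMap_eq_smul_one, smul_smul,
        div_mul_cancel₀ _ hr.ne']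
    _ ≤ (max R 1 / r) • σ := smul_le_smul_of_nonneg_left hrσ (by positivity)

end

/-- `D̲_s^ε(ρ‖σ) = D̄_s^{1−ε}(ρ‖σ)` for a state `ρ`, positive definite `σ` and `ε ∈ (0,1)`. -/
theorem Dlow_eq_Dhigh_one_sub {d : ℕ} (ρ σ : Matrix (Fin d) (Fin d) ℂ)
    (hρ : ρ.PosSemidef) (hρtr : ρ.trace = 1) (hσ : σ.PosDef)
    (ε : ℝ) (hε0 : 0 < ε) (hε1 : ε < 1) :
    Dlow ε ρ σ = Dhigh (1 - ε) ρ σ := by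
  set f : ℝ → ℝ := fun γ => trPos (ρ - (2 : ℝ) ^ γ • σ)
  have hanti : Antitone f := (antitone_trPos_sub_smul hρ.isHermitian hσ.posSemidef.nonneg)
    |>.comp_monotone (Real.monotone_rpow_of_base_ge_one one_le_two)
  have hstrict : StrictAntiOn f {γ | 1 - ε ≤ f γ} := fun γ _ γ' hγ' hγγ' =>
    trPos_sub_smul_lt_of_lt hρ.isHermitian hσ
      (Real.rpow_lt_rpow_of_exponent_lt one_lt_two hγγ') ((sub_pos.2 hε1).trans_le hγ')
  obtain ⟨t, ht, hρt⟩ := exists_le_smul_of_posDef hρ.isHermitian hσ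
  have hvanish : f (Real.logb 2 t) < 1 - ε := by
    simp only [f, Real.rpow_logb two_pos (by norm_num) ht,
      trPos_eq_zero_of_nonpos (sub_nonpos.2 hρt)]
    linarith
  have hlower (γ : ℝ) : 1 - (2 : ℝ) ^ γ * σ.trace.re ≤ f γ := by
    have h := trace_re_le_trPos (hρ.isHermitian.sub_real_smul hσ.isHermitian ((2 : ℝ) ^ γ))
    simpa [hρtr] using h
  obtain ⟨γ, hγ⟩ : ∃ γ : ℝ, 1 - ε < 1 - (2 : ℝ) ^ γ * σ.trace.re := by
    have h := ((tendsto_rpow_atBot_of_base_gt_one 2 one_lt_two).mul_const σ.trace.re).const_sub 1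
    rw [zero_mul, sub_zero] at h
    exact (h.eventually (lt_mem_nhds (by linarith))).exists
  exact hanti.csSup_setOf_le_eq_csInf_setOf_le hstrict ⟨_, hvanish⟩ ⟨γ, hγ.trans_le (hlower γ)⟩
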